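/- arXiv:2208.01091 — 2 statements merged into one kernel-verified Lean document; each statement's English description precedes it below -/
import Mathlib

section
/- Commutation identity E·A = A'·E: for the k×k matrices E, A over ℤ[z_1,…,z_k] defined below and A' the antidiagonal transpose of A, one has the matrix equality E·A = A'·E. -/
open Finset MvPolynomial

noncomputable section

/-- The elementary symmetric polynomial `e_r` of a family of ring elements. -/
def esymmF {R : Type*} [CommRing R] {m : ℕ} (f : Fin m → R) (r : ℕ) : R :=
  ∑ t ∈ Finset.powersetCard r Finset.univ, ∏ j ∈ t, f j

/-- `e_r(z)` in `ℤ[z_1,…,z_k]`. -/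
def eP (k : ℕ) (r : ℕ) : MvPolynomial (Fin k) ℤ :=
  esymmF (fun i => X i) r

/-- The truncation `c^z_{≥j} = Σ_{i=j}^{k} (-1)^{i-j} e_i(z)`. -/
def cGe (k : ℕ) (j : ℕ) : MvPolynomial (Fin k) ℤ :=
  ∑ i ∈ Finset.Icc j k, (-1) ^ (i - j) * eP k i

/-- The truncation `c^z_{≤m} = Σ_{i=0}^{m} (-1)^i e_i(z)`. -/
def cLe (k : ℕ) (m : ℕ) : MvPolynomial (Fin k) ℤ :=
  ∑ i ∈ Finset.range (m + 1), (-1) ^ i * eP k i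

/-- Entries (with `1`-based indices) of the matrix `A`:
`A_{ij} = (-1)^{k-i} c^z_{≥ k-j+1}` for `j < i` and `A_{ij} = (-1)^{j-i} c^z_{≤ k-j}` for `j ≥ i`. -/
def Afun (k : ℕ) (i j : ℕ) : MvPolynomial (Fin k) ℤ :=
  if j < i then (-1) ^ (k - i) * cGe k (k - j + 1) else (-1) ^ (j - i) * cLe k (k - j)

/-- Entries (with `1`-based indices) of the lower-triangular matrix `E`:
`E_{ij} = −e_{i−j}(z)` for `i ≥ j` and `E_{ij} = 0` for `i < j`. -/
def Efun (k : ℕ) (i j : ℕ) : MvPolynomial (Fin k) ℤ :=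
  if j ≤ i then -(eP k (i - j)) else 0

/-- The `k × k` matrix `E`. -/
def EMat (k : ℕ) : Matrix (Fin k) (Fin k) (MvPolynomial (Fin k) ℤ) :=
  Matrix.of fun i j => Efun k (i.val + 1) (j.val + 1)

/-- The `k × k` matrix `A`. -/
def AMat (k : ℕ) : Matrix (Fin k) (Fin k) (MvPolynomial (Fin k) ℤ) :=
  Matrix.of fun i j => Afun k (i.val + 1) (j.val + 1)

/-- The antidiagonal transpose `A'` of `A`: `A'_{ij} = A_{k+1-j, k+1-i}` (`1`-based). -/
def AMat' (k : ℕ) : Matrix (Fin k) (Fin k) (MvPolynomial (Fin k) ℤ) :=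
  Matrix.of fun i j => Afun k (k + 1 - (j.val + 1)) (k + 1 - (i.val + 1))


/-! Put `s_r = (-1)^r e_r`, let `P` be the lower-triangular Toeplitz matrix with symbol `s`,
`L` the strictly lower-triangular all-ones matrix, `S = diag((-1)^i)` and `c = c^z_{≤k}`. Then
`E` is minus the Toeplitz matrix of `e`, which `S` conjugates into `P`, while
`A = S (𝟙 wᵀ - c L) S` and `A' = S (v 𝟙ᵀ - c L) S`, where `v = P 𝟙` and `wᵀ = 𝟙ᵀ P` are the
vectors of partial sums of `s` (the entries below the diagonal come from
`c^z_{≤m} + (-1)^{m+1} c^z_{≥m+1} = c^z_{≤k}`). So `E A = A' E` reduces to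
`P (𝟙 (𝟙ᵀ P) - c L) = ((P 𝟙) 𝟙ᵀ - c L) P`: both rank-one terms equal `(P 𝟙)(𝟙ᵀ P)`, and `P`
commutes with `L` because lower-triangular Toeplitz matrices multiply by convolving their
symbols. -/

section LowerToeplitz

open Matrix

variable {R : Type*} {n : ℕ}

def lowerToeplitz [Zero R] (s : ℕ → R) : Matrix (Fin n) (Fin n) R :=
  Matrix.of fun i j => if j ≤ i then s ((i : ℕ) - j) else 0

theorem Fin.sum_univ_eq_sum_Ico_of_eq_zero [AddCommMonoid R] {a b : ℕ} (hb : b ≤ n)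
    (f : ℕ → R) (hf : ∀ l < n, l ∉ Ico a b → f l = 0) : ∑ l : Fin n, f l = ∑ l ∈ Ico a b, f l := by
  rw [Fin.sum_univ_eq_sum_range f]
  refine (sum_subset (fun l hl => ?_) fun l hl hl' => hf l (mem_range.mp hl) hl').symm
  simp only [mem_Ico, mem_range] at hl ⊢
  omega

theorem lowerToeplitz_mul [Semiring R] (s t : ℕ → R) :
    (lowerToeplitz s * lowerToeplitz t : Matrix (Fin n) (Fin n) R) =
      lowerToeplitz fun m => ∑ p ∈ antidiagonal m, s p.1 * t p.2 := by
  ext i j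
  simp only [lowerToeplitz, Matrix.mul_apply, Matrix.of_apply, Fin.le_def]
  rw [Fin.sum_univ_eq_sum_Ico_of_eq_zero (a := j) (b := i + 1) i.isLt
    (fun l => (if l ≤ i then s (i - l) else 0) * if j ≤ l then t (l - j) else 0)]
  · split_ifs with hji
    · rw [sum_Ico_eq_sum_range, ← Nat.sum_antidiagonal_swap]
      simp only [Prod.fst_swap, Prod.snd_swap]
      rw [Nat.sum_antidiagonal_eq_sum_range_succ (fun a b => s b * t a), Nat.succ_eq_add_one,
        Nat.sub_add_comm hji]
      refine sum_congr rfl fun r hr => ?_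
      rw [mem_range] at hr
      rw [if_pos (by omega), if_pos (by omega), Nat.add_sub_cancel_left, Nat.sub_sub]
    · rw [Ico_eq_empty (by omega), sum_empty]
  · intro l _ hl
    rw [mem_Ico, not_and_or, not_le, not_lt] at hl
    rcases hl with hl | hl
    · rw [if_neg (by omega : ¬ (j : ℕ) ≤ l), mul_zero]
    · rw [if_neg (by omega : ¬ l ≤ (i : ℕ)), zero_mul]

theorem lowerToeplitz_mul_comm [CommSemiring R] (s t : ℕ → R) :
    (lowerToeplitz s * lowerToeplitz t : Matrix (Fin n) (Fin n) R) =
      lowerToeplitz t * lowerToeplitz s := by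
  simp only [lowerToeplitz_mul]
  congr 1
  funext m
  rw [← Nat.sum_antidiagonal_swap]
  simp only [Prod.fst_swap, Prod.snd_swap, mul_comm]

theorem lowerToeplitz_mulVec_one [Semiring R] (s : ℕ → R) (i : Fin n) :
    (lowerToeplitz s *ᵥ 1) i = ∑ r ∈ range (i + 1), s r := by
  simp only [lowerToeplitz, Matrix.mulVec, dotProduct, Matrix.of_apply, Pi.one_apply, mul_one,
    Fin.le_def]
  rw [Fin.sum_univ_eq_sum_Ico_of_eq_zero (a := 0) (b := i + 1) i.isLt
    (fun l => if l ≤ i then s (i - l) else 0) fun l _ hl => by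
      rw [mem_Ico] at hl; exact if_neg (by omega)]
  rw [← range_eq_Ico, ← sum_range_reflect]
  refine sum_congr rfl fun r hr => ?_
  rw [mem_range] at hr
  rw [if_pos (by omega), Nat.add_sub_cancel, Nat.sub_sub_self (by omega)]

theorem one_vecMul_lowerToeplitz [Semiring R] (s : ℕ → R) (j : Fin n) :
    (1 ᵥ* lowerToeplitz s) j = ∑ r ∈ range (n - j), s r := by
  simp only [lowerToeplitz, Matrix.vecMul, dotProduct, Matrix.of_apply, Pi.one_apply, one_mul,
    Fin.le_def]
  rw [Fin.sum_univ_eq_sum_Ico_of_eq_zero (a := j) (b := n) le_rfl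
    (fun l => if j ≤ l then s (l - j) else 0) fun l hn hl => by
      rw [mem_Ico] at hl; exact if_neg (by omega), sum_Ico_eq_sum_range]
  exact sum_congr rfl fun r _ => by rw [if_pos (by omega), Nat.add_sub_cancel_left]

theorem lowerToeplitz_ite_zero_apply [Zero R] (c : R) (i j : Fin n) :
    lowerToeplitz (fun r => if r = 0 then 0 else c) i j = if j < i then c else 0 := by
  simp only [lowerToeplitz, of_apply]
  split_ifs <;> first | rfl | omega

def signDiagonal [Ring R] (n : ℕ) : Matrix (Fin n) (Fin n) R :=
  diagonal fun i => (-1) ^ (i : ℕ)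

theorem neg_one_pow_eq_neg_one_pow_of_mod_two_eq [Monoid R] [HasDistribNeg R] {a b : ℕ}
    (h : a % 2 = b % 2) : (-1 : R) ^ a = (-1) ^ b :=
  neg_one_pow_congr (by rw [Nat.even_iff, Nat.even_iff, h])

theorem lowerToeplitz_mul_signDiagonal [CommRing R] (e : ℕ → R) :
    (lowerToeplitz e * signDiagonal n : Matrix (Fin n) (Fin n) R) =
      signDiagonal n * lowerToeplitz fun r => (-1) ^ r * e r := by
  ext i j
  simp only [signDiagonal, lowerToeplitz, mul_diagonal, diagonal_mul, of_apply]
  split_ifs with hji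
  · rw [← mul_assoc, ← pow_add, mul_comm (e _),
      neg_one_pow_eq_neg_one_pow_of_mod_two_eq (a := i + (i - j)) (b := j) (by omega)]
  · rw [zero_mul, mul_zero]

theorem signDiagonal_mul_lowerToeplitz [CommRing R] (e : ℕ → R) :
    (signDiagonal n * lowerToeplitz e : Matrix (Fin n) (Fin n) R) =
      (lowerToeplitz fun r => (-1) ^ r * e r) * signDiagonal n := by
  ext i j
  simp only [signDiagonal, lowerToeplitz, mul_diagonal, diagonal_mul, of_apply]
  split_ifs with hji
  · rw [mul_right_comm, ← pow_add, Nat.sub_add_cancel hji]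
  · rw [zero_mul, mul_zero]

theorem lowerToeplitz_mul_vecMulVec_sub_lowerToeplitz [CommRing R] (s t : ℕ → R) :
    (lowerToeplitz s * (vecMulVec 1 (1 ᵥ* lowerToeplitz s) - lowerToeplitz t) :
        Matrix (Fin n) (Fin n) R) =
      (vecMulVec (lowerToeplitz s *ᵥ 1) 1 - lowerToeplitz t) * lowerToeplitz s := by
  rw [mul_sub, sub_mul, mul_vecMulVec, vecMulVec_mul, lowerToeplitz_mul_comm]

end LowerToeplitz

open Matrix

theorem cLe_add_cGe (k : ℕ) {m : ℕ} (hm : m ≤ k) :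
    cLe k m + (-1) ^ (m + 1) * cGe k (m + 1) = cLe k k := by
  rw [cLe, cGe, cLe, mul_sum, ← sum_range_add_sum_Ico _ (by omega : m + 1 ≤ k + 1),
    ← Ico_add_one_right_eq_Icc]
  congr 1
  refine sum_congr rfl fun r hr => ?_
  rw [← mul_assoc, ← pow_add, Nat.add_sub_cancel' (mem_Ico.mp hr).1]

theorem Afun_eq_neg_one_pow_mul (k : ℕ) {I J : ℕ} (hI : I ≤ k) (hJ : J ≤ k) :
    Afun k I J = (-1) ^ (I + J) * (cLe k (k - J) - if J < I then cLe k k else 0) := by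
  rw [Afun]
  split_ifs with hJI
  · rw [← cLe_add_cGe k (by omega : k - J ≤ k), sub_add_cancel_left, mul_neg, ← mul_assoc,
      ← pow_add, ← neg_mul, ← neg_one_mul ((-1 : MvPolynomial (Fin k) ℤ) ^ _),
      ← pow_succ']
    exact congrArg (· * _) (neg_one_pow_eq_neg_one_pow_of_mod_two_eq (by omega))
  · rw [sub_zero, neg_one_pow_eq_neg_one_pow_of_mod_two_eq (by omega : (J - I) % 2 = (I + J) % 2)]

theorem EMat_eq_neg_lowerToeplitz (k : ℕ) : EMat k = -lowerToeplitz (eP k) := by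
  ext i j : 1
  simp only [EMat, Efun, lowerToeplitz, of_apply, Matrix.neg_apply, Nat.add_sub_add_right,
    Nat.add_le_add_iff_right, ← Fin.le_def]
  split_ifs <;> simp only [neg_zero]

theorem AMat_eq_signDiagonal_conj (k : ℕ) :
    AMat k = signDiagonal k * (vecMulVec 1 (1 ᵥ* lowerToeplitz fun r => (-1) ^ r * eP k r) -
      lowerToeplitz fun r => if r = 0 then 0 else cLe k k) * signDiagonal k := by
  ext i j : 1
  simp only [AMat, signDiagonal, of_apply, mul_diagonal, diagonal_mul, Matrix.sub_apply,
    vecMulVec_apply, Pi.one_apply, one_mul, one_vecMul_lowerToeplitz]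
  rw [Afun_eq_neg_one_pow_mul k i.isLt j.isLt, lowerToeplitz_ite_zero_apply, cLe,
    show k - (j + 1) + 1 = k - j by omega]
  simp only [Nat.succ_lt_succ_iff, ← Fin.lt_def, Nat.succ_eq_add_one]
  ring

theorem AMat'_eq_signDiagonal_conj (k : ℕ) :
    AMat' k = signDiagonal k * (vecMulVec (lowerToeplitz (fun r => (-1) ^ r * eP k r) *ᵥ 1) 1 -
      lowerToeplitz fun r => if r = 0 then 0 else cLe k k) * signDiagonal k := by
  ext i j : 1
  simp only [AMat', signDiagonal, of_apply, mul_diagonal, diagonal_mul, Matrix.sub_apply,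
    vecMulVec_apply, Pi.one_apply, mul_one, lowerToeplitz_mulVec_one]
  rw [Afun_eq_neg_one_pow_mul k (by omega) (by omega), lowerToeplitz_ite_zero_apply,
    show k - (k + 1 - (i + 1)) = i by omega,
    neg_one_pow_eq_neg_one_pow_of_mod_two_eq (b := i + j) (by omega), pow_add]
  have hlt : k + 1 - (i + 1) < k + 1 - (j + 1) ↔ j < i := by rw [Fin.lt_def]; omega
  simp only [hlt, cLe]
  ring

theorem EMat_mul_AMat_eq_AMat'_mul_EMat_general (k : ℕ) :
    EMat k * AMat k = AMat' k * EMat k := by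
  rw [EMat_eq_neg_lowerToeplitz, AMat_eq_signDiagonal_conj, AMat'_eq_signDiagonal_conj, neg_mul,
    mul_neg, neg_inj]
  simp only [← Matrix.mul_assoc, lowerToeplitz_mul_signDiagonal]
  rw [Matrix.mul_assoc (signDiagonal k), lowerToeplitz_mul_vecMulVec_sub_lowerToeplitz]
  simp only [Matrix.mul_assoc, signDiagonal_mul_lowerToeplitz]

/-- Commutation identity `E·A = A'·E`. -/
theorem EMat_mul_AMat_eq_AMat'_mul_EMat (k : ℕ) (hk : 1 ≤ k) :
    EMat k * AMat k = AMat' k * EMat k :=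
  EMat_mul_AMat_eq_AMat'_mul_EMat_general k

end
end

section
/- Elimination of the quotient variables in the Coulomb branch presentation: let J be the ideal of ℤ[z_1,…,z_k, ẑ_1,…,ẑ_{n−k}, ζ_1,…,ζ_n] generated by the polynomials V_s := Σ_{i+j=s} e_i(z) e_j(ẑ) − c'_{≥s}(z,ζ) for 1 ≤ s ≤ n−k. Then for every 1 ≤ ℓ ≤ n−k, the element e_ℓ(ẑ) − (-1)^ℓ G'_ℓ(z,ζ) belongs to J; equivalently, e_ℓ(ẑ) ≡ Σ_{i+j=ℓ} (-1)^j e_i(ζ) G_j(z) modulo J. -/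
open Finset MvPolynomial

noncomputable section

/-- The complete homogeneous symmetric polynomial `h_r` of a family. -/
def hsymmF {R : Type*} [CommRing R] {m : ℕ} (f : Fin m → R) (r : ℕ) : R :=
  ∑ μ : Sym (Fin m) r, (μ.1.map f).prod

/-- The ambient polynomial ring `ℤ[z_1,…,z_k, ẑ_1,…,ẑ_{n−k}, ζ_1,…,ζ_n]`. -/
abbrev ZHatZeta (k n : ℕ) := MvPolynomial (Fin k ⊕ Fin (n - k) ⊕ Fin n) ℤ

/-- `e_r(z)`: elementary symmetric polynomial in `z_1,…,z_k`. -/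
def eZ (k n : ℕ) (r : ℕ) : ZHatZeta k n :=
  esymmF (fun i : Fin k => X (Sum.inl i)) r

/-- `e_r(ẑ)`: elementary symmetric polynomial in `ẑ_1,…,ẑ_{n−k}`. -/
def eHat (k n : ℕ) (r : ℕ) : ZHatZeta k n :=
  esymmF (fun i : Fin (n - k) => X (Sum.inr (Sum.inl i))) r

/-- `e_r(ζ)`: elementary symmetric polynomial in `ζ_1,…,ζ_n`. -/
def eZeta (k n : ℕ) (r : ℕ) : ZHatZeta k n :=
  esymmF (fun j : Fin n => X (Sum.inr (Sum.inr j))) r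

/-- `h_r(z)`: complete homogeneous symmetric polynomial in `z_1,…,z_k`. -/
def hZ (k n : ℕ) (r : ℕ) : ZHatZeta k n :=
  hsymmF (fun i : Fin k => X (Sum.inl i)) r

/-- The single-row Grothendieck polynomial
`G_j(z) = Σ_{a,b ≥ 0, a+b ≤ k} (-1)^b h_{j+a}(z) e_b(z)`. -/
def GZ (k n : ℕ) (j : ℕ) : ZHatZeta k n :=
  ∑ a ∈ Finset.range (k + 1), ∑ b ∈ Finset.range (k + 1 - a),
    (-1) ^ b * hZ k n (j + a) * eZ k n b

/-- The equivariant Grothendieck polynomial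
`G'_j(z,ζ) = Σ_{a+b=j} (-1)^a e_a(ζ) G_b(z)`. -/
def GPrime (k n : ℕ) (j : ℕ) : ZHatZeta k n :=
  ∑ p ∈ Finset.HasAntidiagonal.antidiagonal j, (-1) ^ p.1 * eZeta k n p.1 * GZ k n p.2

/-- The truncation `c^z_{≥j} = Σ_{i=j}^{k} (-1)^{i-j} e_i(z)`. -/
def cGeZ (k n : ℕ) (j : ℕ) : ZHatZeta k n :=
  ∑ i ∈ Finset.Icc j k, (-1) ^ (i - j) * eZ k n i

/-- `c'_{≥ℓ}(z,ζ) = e_ℓ(ζ) + Σ_{m=1}^{k-1} e_{ℓ-m}(ζ) c^z_{≥ m+1}`,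
with the convention `e_s(ζ) = 0` for `s < 0` (i.e. for `m > ℓ`). -/
def cPrimeGe (k n : ℕ) (ℓ : ℕ) : ZHatZeta k n :=
  eZeta k n ℓ + ∑ m ∈ Finset.Icc 1 (k - 1),
    (if m ≤ ℓ then eZeta k n (ℓ - m) * cGeZ k n (m + 1) else 0)

/-- The generators `V_s = Σ_{i+j=s} e_i(z) e_j(ẑ) − c'_{≥s}(z,ζ)` of the ideal `J`. -/
def Vgen (k n : ℕ) (s : ℕ) : ZHatZeta k n :=
  (∑ p ∈ Finset.HasAntidiagonal.antidiagonal s, eZ k n p.1 * eHat k n p.2) - cPrimeGe k n s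

/-!
Put `H(t) = Σ h_i(z) t^i` and `E(t) = Σ e_i(z) t^i`, so that `H(t) E(-t) = 1`. Splitting the
coefficient of `t^(j+k)` in `H(t) E(-t) / (1 - t) = 1 / (1 - t)` at the index `j` gives
`G_j(z) = 1 - E(-1) (h_0 + ⋯ + h_{j-1})`, and hence
`E(t) Σ_j (-1)^j G_j(z) t^j = 1 + Σ_{m ≥ 1} c^z_{≥ m+1} t^m`. Multiplying by `Σ_a e_a(ζ) t^a`
yields `Σ_{i+j=ℓ} e_i(z) (-1)^j G'_j = c'_{≥ℓ}` for every `ℓ`, so that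
`V_ℓ = Σ_{i+j=ℓ} e_i(z) (e_j(ẑ) - (-1)^j G'_j)`. As `e_0(z) = 1`, this system is unitriangular
in the differences `e_j(ẑ) - (-1)^j G'_j`, which therefore lie in `J` by induction on `ℓ`.
-/

open scoped PowerSeries

theorem Multiset.esymm_cons_succ {R : Type*} [CommSemiring R] (a : R) (s : Multiset R) (r : ℕ) :
    (a ::ₘ s).esymm (r + 1) = s.esymm (r + 1) + a * s.esymm r := by
  simp only [Multiset.esymm, Multiset.powersetCard_cons, Multiset.map_add, Multiset.sum_add,
    Multiset.map_map, Function.comp_def, Multiset.prod_cons, Multiset.sum_map_mul_left]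

theorem PowerSeries.rescale_neg_one_map {R S : Type*} [CommRing R] [CommRing S] (φ : R →+* S)
    (f : R⟦X⟧) : rescale (-1) (map φ f) = map φ (rescale (-1) f) := by
  simpa using rescale_map φ (-1) f

theorem PowerSeries.rescale_neg_one_rescale_neg_one {R : Type*} [CommRing R] (f : R⟦X⟧) :
    rescale (-1) (rescale (-1) f) = f := by
  rw [rescale_rescale, neg_one_mul, neg_neg, rescale_one, RingHom.id_apply]

namespace MvPolynomial

variable {σ τ R : Type*} [CommRing R]

theorem rename_esymm_eq_multiset_esymm [Fintype σ] (f : σ → τ) (r : ℕ) :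
    rename f (esymm σ R r) = (univ.val.map fun i => (X (f i) : MvPolynomial τ R)).esymm r := by
  rw [← aeval_X_left_apply (rename f _), aeval_rename, aeval_esymm_eq_multiset_esymm]
  rfl

theorem esymm_option_succ [Fintype σ] (r : ℕ) :
    esymm (Option σ) R (r + 1) =
      rename some (esymm σ R (r + 1)) + X none * rename some (esymm σ R r) := by
  rw [esymm_eq_multiset_esymm, univ_option]
  simp [Finset.insertNone, Multiset.esymm_cons_succ, rename_esymm_eq_multiset_esymm]

theorem hsymm_option_succ [Fintype σ] [DecidableEq σ] (r : ℕ) :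
    hsymm (Option σ) R (r + 1) =
      X none * hsymm (Option σ) R r + rename some (hsymm σ R (r + 1)) := by
  rw [hsymm, ← symOptionSuccEquiv.symm.sum_comp, Fintype.sum_sum_type]
  simp [symOptionSuccEquiv, SymOptionSuccEquiv.decode_inl, SymOptionSuccEquiv.decode_inr, hsymm,
    Finset.mul_sum, Multiset.map_map, map_multiset_prod, Sym.coe_cons]

variable (σ R) in
def hsymmSeries [Fintype σ] [DecidableEq σ] : (MvPolynomial σ R)⟦X⟧ :=
  PowerSeries.mk (hsymm σ R)

variable (σ R) in
def esymmSeries [Fintype σ] : (MvPolynomial σ R)⟦X⟧ :=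
  PowerSeries.mk (esymm σ R)

theorem map_rename_hsymmSeries [Fintype σ] [DecidableEq σ] [Fintype τ] [DecidableEq τ]
    (e : σ ≃ τ) :
    PowerSeries.map (rename (R := R) e).toRingHom (hsymmSeries σ R) = hsymmSeries τ R := by
  ext n
  simp [hsymmSeries, rename_hsymm]

theorem map_rename_esymmSeries [Fintype σ] [Fintype τ] (e : σ ≃ τ) :
    PowerSeries.map (rename (R := R) e).toRingHom (esymmSeries σ R) = esymmSeries τ R := by
  ext n
  simp [esymmSeries, rename_esymm]

theorem hsymmSeries_of_isEmpty [Fintype σ] [DecidableEq σ] [IsEmpty σ] : hsymmSeries σ R = 1 := by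
  ext (_ | n)
  · simp [hsymmSeries]
  · simp [hsymmSeries, hsymm]

theorem esymmSeries_of_isEmpty [Fintype σ] [IsEmpty σ] : esymmSeries σ R = 1 := by
  refine PowerSeries.ext fun n => ?_
  cases n
  · simp [esymmSeries]
  · rw [esymmSeries, PowerSeries.coeff_mk, esymm, powersetCard_eq_empty.2 (by simp)]
    simp

theorem hsymmSeries_option_mul_one_sub [Fintype σ] [DecidableEq σ] :
    hsymmSeries (Option σ) R * (1 - PowerSeries.C (X none) * PowerSeries.X) =
      PowerSeries.map (rename some).toRingHom (hsymmSeries σ R) := by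
  ext (_ | n)
  · simp [hsymmSeries]
  · simp [hsymmSeries, mul_sub, hsymm_option_succ, ← mul_assoc, mul_comm _ (PowerSeries.C _)]

theorem rescale_esymmSeries_option [Fintype σ] :
    PowerSeries.rescale (-1) (esymmSeries (Option σ) R) =
      (1 - PowerSeries.C (X none) * PowerSeries.X) *
        PowerSeries.map (rename some).toRingHom (PowerSeries.rescale (-1) (esymmSeries σ R)) := by
  refine PowerSeries.ext fun n => ?_
  cases n
  · simp [esymmSeries, PowerSeries.coeff_mul]
  · simp only [esymmSeries, esymm_option_succ, PowerSeries.coeff_rescale, PowerSeries.coeff_mk,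
      sub_mul, one_mul, mul_assoc, map_sub, PowerSeries.coeff_map, PowerSeries.coeff_C_mul,
      PowerSeries.coeff_succ_X_mul, AlgHom.toRingHom_eq_coe, RingHom.coe_coe, map_mul, map_pow,
      map_neg, map_one]
    ring

theorem hsymmSeries_mul_rescale_esymmSeries_of_equiv [Fintype σ] [DecidableEq σ] [Fintype τ]
    [DecidableEq τ] (e : σ ≃ τ)
    (h : hsymmSeries σ R * PowerSeries.rescale (-1) (esymmSeries σ R) = 1) :
    hsymmSeries τ R * PowerSeries.rescale (-1) (esymmSeries τ R) = 1 := by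
  rw [← map_rename_hsymmSeries e, ← map_rename_esymmSeries e, PowerSeries.rescale_neg_one_map,
    ← map_mul, h, map_one]

theorem hsymmSeries_mul_rescale_esymmSeries_option [Fintype σ] [DecidableEq σ]
    (h : hsymmSeries σ R * PowerSeries.rescale (-1) (esymmSeries σ R) = 1) :
    hsymmSeries (Option σ) R * PowerSeries.rescale (-1) (esymmSeries (Option σ) R) = 1 := by
  rw [rescale_esymmSeries_option, ← mul_assoc, hsymmSeries_option_mul_one_sub, ← map_mul, h,
    map_one]

theorem hsymmSeries_mul_rescale_esymmSeries [Fintype σ] [DecidableEq σ] :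
    hsymmSeries σ R * PowerSeries.rescale (-1) (esymmSeries σ R) = 1 := by
  suffices ∀ m, hsymmSeries (Fin m) R * PowerSeries.rescale (-1) (esymmSeries (Fin m) R) = 1 from
    hsymmSeries_mul_rescale_esymmSeries_of_equiv (Fintype.equivFin σ).symm (this _)
  intro m
  induction m with
  | zero => simp [hsymmSeries_of_isEmpty, esymmSeries_of_isEmpty]
  | succ m ih =>
    exact hsymmSeries_mul_rescale_esymmSeries_of_equiv (_root_.finSuccEquiv m).symm
      (hsymmSeries_mul_rescale_esymmSeries_option ih)

end MvPolynomial

section Families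

variable {S : Type*} [CommRing S] {m : ℕ}

theorem esymmF_eq_aeval (f : Fin m → S) (r : ℕ) : esymmF f r = aeval f (esymm (Fin m) ℤ r) := by
  rw [aeval_esymm_eq_multiset_esymm, Finset.esymm_map_val]
  rfl

theorem hsymmF_eq_aeval (f : Fin m → S) (r : ℕ) : hsymmF f r = aeval f (hsymm (Fin m) ℤ r) := by
  simp [hsymm, hsymmF, map_multiset_prod, Multiset.map_map]

theorem esymmF_zero (f : Fin m → S) : esymmF f 0 = 1 := by
  simp [esymmF]

theorem esymmF_eq_zero_of_lt (f : Fin m → S) {r : ℕ} (h : m < r) : esymmF f r = 0 := by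
  rw [esymmF, powersetCard_eq_empty.2 (by simpa using h), sum_empty]

theorem mk_hsymmF_mul_rescale_mk_esymmF (f : Fin m → S) :
    PowerSeries.mk (hsymmF f) * PowerSeries.rescale (-1) (PowerSeries.mk (esymmF f)) = 1 := by
  have h := congrArg (PowerSeries.map (aeval f).toRingHom)
    (hsymmSeries_mul_rescale_esymmSeries (σ := Fin m) (R := ℤ))
  rw [map_mul, ← PowerSeries.rescale_neg_one_map, map_one] at h
  convert h using 3 <;> ext <;> simp [hsymmSeries, esymmSeries, esymmF_eq_aeval, hsymmF_eq_aeval]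

end Families

namespace PowerSeries

variable {R : Type*} [CommRing R] {H E : R⟦X⟧} {k : ℕ}

theorem coeff_mul_mk_one (F : R⟦X⟧) (n : ℕ) :
    coeff n (F * mk 1) = ∑ i ∈ range (n + 1), coeff i F := by
  simp [coeff_mul, Finset.Nat.sum_antidiagonal_eq_sum_range_succ_mk]

theorem sum_range_coeff_eq_of_le (hE : ∀ i, k < i → coeff i E = 0) {N : ℕ} (hN : k ≤ N) :
    ∑ i ∈ range (N + 1), coeff i E = ∑ i ∈ range (k + 1), coeff i E :=
  (sum_subset (range_subset_range.2 (by omega))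
    fun i hi hi' => hE i (by simp only [mem_range] at hi hi'; omega)).symm

theorem sum_range_add_sum_Icc_coeff (hE : ∀ i, k < i → coeff i E = 0) (m : ℕ) :
    ∑ i ∈ range (m + 1), coeff i E + ∑ i ∈ Icc (m + 1) k, coeff i E =
      ∑ i ∈ range (k + 1), coeff i E := by
  rcases le_or_gt m k with hm | hm
  · rw [← Finset.Ico_add_one_right_eq_Icc, sum_range_add_sum_Ico _ (by omega)]
  · rw [Icc_eq_empty (by omega), sum_empty, add_zero, sum_range_coeff_eq_of_le hE hm.le]

variable (H E k) in
def grothendieckSeries : R⟦X⟧ :=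
  mk fun j => ∑ a ∈ range (k + 1), ∑ b ∈ range (k + 1 - a), coeff (j + a) H * coeff b E

theorem coeff_grothendieckSeries (hHE : H * E = 1) (hE : ∀ i, k < i → coeff i E = 0) (j : ℕ) :
    coeff j (grothendieckSeries H E k) =
      1 - (∑ x ∈ range j, coeff x H) * ∑ b ∈ range (k + 1), coeff b E := by
  have hHP : coeff (j + k) (H * (E * mk 1)) = 1 := by simp [← mul_assoc, hHE]
  rw [coeff_mul, Finset.Nat.sum_antidiagonal_eq_sum_range_succ
    (fun a b => coeff a H * coeff b (E * mk 1)), Nat.succ_eq_add_one, add_assoc, sum_range_add]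
    at hHP
  have hlow : ∀ x ∈ range j, coeff x H * coeff (j + k - x) (E * mk 1) =
      coeff x H * ∑ b ∈ range (k + 1), coeff b E := by
    intro x hx
    rw [coeff_mul_mk_one, sum_range_coeff_eq_of_le hE (by simp at hx; omega)]
  have hhigh : ∀ a ∈ range (k + 1), coeff (j + a) H * coeff (j + k - (j + a)) (E * mk 1) =
      ∑ b ∈ range (k + 1 - a), coeff (j + a) H * coeff b E := by
    intro a ha
    rw [coeff_mul_mk_one, mul_sum, show j + k - (j + a) + 1 = k + 1 - a by simp at ha; omega]
  rw [sum_congr rfl hlow, sum_congr rfl hhigh, ← sum_mul] at hHP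
  rw [grothendieckSeries, coeff_mk, ← hHP]
  ring

theorem coeff_succ_mul_grothendieckSeries (hHE : H * E = 1) (hE : ∀ i, k < i → coeff i E = 0)
    (m : ℕ) : coeff (m + 1) (E * grothendieckSeries H E k) = -∑ i ∈ Icc (m + 2) k, coeff i E := by
  obtain ⟨S, hS⟩ : ∃ S, ∑ b ∈ range (k + 1), coeff b E = S := ⟨_, rfl⟩
  have hG : grothendieckSeries H E k = mk 1 - C S * (X * (H * mk 1)) := by
    ext (_ | j)
    · simp [coeff_grothendieckSeries hHE hE]
    · simp [coeff_grothendieckSeries hHE hE, coeff_mul_mk_one, hS, mul_comm]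
  have hEG : E * grothendieckSeries H E k = E * mk 1 - C S * (X * mk 1) := by
    rw [hG]
    linear_combination (-(C S * (X * mk 1))) * hHE
  rw [hEG, map_sub, coeff_C_mul, coeff_succ_X_mul, coeff_mul_mk_one, ← hS,
    ← sum_range_add_sum_Icc_coeff hE (m + 1)]
  simp

end PowerSeries

theorem Ideal.mem_of_sum_antidiagonal_mul_mem {R : Type*} [CommRing R] {I : Ideal R}
    {a d : ℕ → R} (ha : a 0 = 1) (hd : d 0 ∈ I) {N : ℕ}
    (h : ∀ ℓ ∈ Set.Icc 1 N, ∑ p ∈ antidiagonal ℓ, a p.1 * d p.2 ∈ I) {ℓ : ℕ} (hℓ : ℓ ≤ N) :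
    d ℓ ∈ I := by
  induction ℓ using Nat.strong_induction_on with
  | _ ℓ ih =>
    rcases ℓ with _ | ℓ
    · exact hd
    have hsum := h (ℓ + 1) ⟨by omega, hℓ⟩
    rw [Finset.Nat.sum_antidiagonal_succ, ha, one_mul] at hsum
    have hrest : ∑ p ∈ antidiagonal ℓ, a (p.1 + 1) * d p.2 ∈ I :=
      I.sum_mem fun p hp => by
        rw [Finset.HasAntidiagonal.mem_antidiagonal] at hp
        exact I.mul_mem_left _ (ih _ (by omega) (by omega))
    simpa using I.sub_mem hsum hrest

section Coulomb

open PowerSeries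

variable (k n : ℕ)

theorem eZ_zero : eZ k n 0 = 1 := esymmF_zero _

theorem cGeZ_eq_zero_of_lt {j : ℕ} (h : k < j) : cGeZ k n j = 0 := by
  rw [cGeZ, Icc_eq_empty (by omega), sum_empty]

theorem mk_hZ_mul_rescale_mk_eZ : mk (hZ k n) * rescale (-1) (mk (eZ k n)) = 1 :=
  mk_hsymmF_mul_rescale_mk_esymmF _

theorem coeff_rescale_mk_eZ_of_lt {i : ℕ} (h : k < i) :
    coeff i (rescale (-1) (mk (eZ k n))) = 0 := by
  simp [coeff_rescale, eZ, esymmF_eq_zero_of_lt _ h]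

theorem mk_GZ :
    mk (GZ k n) = grothendieckSeries (mk (hZ k n)) (rescale (-1) (mk (eZ k n))) k := by
  refine PowerSeries.ext fun j => ?_
  simp only [coeff_mk, grothendieckSeries, coeff_rescale, GZ]
  exact sum_congr rfl fun a _ => sum_congr rfl fun b _ => by ring

theorem GZ_zero : GZ k n 0 = 1 := by
  have h := congrArg (PowerSeries.coeff 0) (mk_GZ k n)
  rw [coeff_mk, coeff_grothendieckSeries (mk_hZ_mul_rescale_mk_eZ k n)
    (fun _ => coeff_rescale_mk_eZ_of_lt k n) 0] at h
  simpa using h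

def cGeSeries : (ZHatZeta k n)⟦X⟧ :=
  mk fun m => if m = 0 then 1 else cGeZ k n (m + 1)

theorem mk_eZ_mul_rescale_mk_GZ : mk (eZ k n) * rescale (-1) (mk (GZ k n)) = cGeSeries k n := by
  refine PowerSeries.ext fun m => ?_
  rw [cGeSeries, coeff_mk]
  rcases m with _ | m
  · simp [PowerSeries.coeff_mul, GZ_zero, eZ_zero]
  · rw [← rescale_neg_one_rescale_neg_one (mk (eZ k n)), ← map_mul, coeff_rescale, mk_GZ,
      coeff_succ_mul_grothendieckSeries (mk_hZ_mul_rescale_mk_eZ k n)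
      (fun _ => coeff_rescale_mk_eZ_of_lt k n), cGeZ, mul_neg, mul_sum, ← sum_neg_distrib]
    refine sum_congr rfl fun i hi => ?_
    obtain ⟨d, rfl⟩ := Nat.exists_eq_add_of_le (mem_Icc.1 hi).1
    have hsq : ((-1 : ZHatZeta k n) ^ (m + 1)) * (-1) ^ (m + 1) = 1 := by
      rw [← mul_pow]
      norm_num
    simp only [coeff_rescale, coeff_mk, Nat.add_sub_cancel_left]
    linear_combination (-1) ^ d * eZ k n (m + 1 + 1 + d) * hsq

theorem coeff_mk_eZeta_mul_cGeSeries (ℓ : ℕ) :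
    PowerSeries.coeff ℓ (mk (eZeta k n) * cGeSeries k n) = cPrimeGe k n ℓ := by
  rw [mul_comm, PowerSeries.coeff_mul, Finset.Nat.sum_antidiagonal_eq_sum_range_succ
    (fun a b => PowerSeries.coeff a _ * PowerSeries.coeff b _), sum_range_succ']
  simp only [cGeSeries, coeff_mk, if_pos, Nat.sub_zero, one_mul, Nat.add_one_ne_zero, if_false,
    cPrimeGe]
  rw [add_comm, ← sum_filter]
  refine congrArg (eZeta k n ℓ + ·) ?_
  calc ∑ x ∈ range ℓ, cGeZ k n (x + 1 + 1) * eZeta k n (ℓ - (x + 1))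
      = ∑ a ∈ Icc 1 ℓ, eZeta k n (ℓ - a) * cGeZ k n (a + 1) := by
        rw [range_eq_Ico, ← Ico_add_one_right_eq_Icc, ← sum_Ico_add' _ 0 ℓ 1]
        exact sum_congr rfl fun _ _ => mul_comm _ _
    _ = ∑ a ∈ Icc 1 (k - 1) with a ≤ ℓ, eZeta k n (ℓ - a) * cGeZ k n (a + 1) := by
        refine (sum_subset (fun a ha => ?_) fun a ha ha' => ?_).symm
        · simp only [mem_filter, mem_Icc] at ha ⊢
          omega
        · simp only [mem_filter, mem_Icc] at ha ha'
          rw [cGeZ_eq_zero_of_lt k n (by omega), mul_zero]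

theorem rescale_mk_GPrime :
    rescale (-1) (mk (GPrime k n)) = mk (eZeta k n) * rescale (-1) (mk (GZ k n)) := by
  have h : mk (GPrime k n) = rescale (-1) (mk (eZeta k n)) * mk (GZ k n) := by
    refine PowerSeries.ext fun j => ?_
    simp [GPrime, PowerSeries.coeff_mul, coeff_rescale]
  rw [h, map_mul, rescale_neg_one_rescale_neg_one]

theorem sum_antidiagonal_eZ_mul_GPrime (ℓ : ℕ) :
    ∑ p ∈ antidiagonal ℓ, eZ k n p.1 * ((-1) ^ p.2 * GPrime k n p.2) = cPrimeGe k n ℓ := by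
  rw [← coeff_mk_eZeta_mul_cGeSeries, ← mk_eZ_mul_rescale_mk_GZ, mul_left_comm,
    ← rescale_mk_GPrime]
  simp [PowerSeries.coeff_mul, coeff_rescale]

theorem GPrime_zero : GPrime k n 0 = 1 := by
  simp [GPrime, GZ_zero, eZeta, esymmF_zero]

theorem Vgen_eq_sum_antidiagonal (ℓ : ℕ) :
    Vgen k n ℓ =
      ∑ p ∈ antidiagonal ℓ, eZ k n p.1 * (eHat k n p.2 - (-1) ^ p.2 * GPrime k n p.2) := by
  simp only [mul_sub, sum_sub_distrib, sum_antidiagonal_eZ_mul_GPrime, Vgen]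

end Coulomb

theorem eHat_equiv_GPrime_mod_coulomb_general (k n : ℕ) (ℓ : ℕ) (hℓ : ℓ ≤ n - k) :
    eHat k n ℓ - (-1) ^ ℓ * GPrime k n ℓ
      ∈ Ideal.span (Vgen k n '' Set.Icc 1 (n - k)) :=
  Ideal.mem_of_sum_antidiagonal_mul_mem (a := eZ k n)
    (d := fun j => eHat k n j - (-1) ^ j * GPrime k n j) (eZ_zero k n)
    (by simp [GPrime_zero, eHat, esymmF_zero])
    (fun s hs => Vgen_eq_sum_antidiagonal k n s ▸ Ideal.subset_span ⟨s, hs, rfl⟩) hℓ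

/-- Elimination of the quotient variables in the Coulomb branch presentation:
if `J` is the ideal generated by `V_s` for `1 ≤ s ≤ n−k`, then for `1 ≤ ℓ ≤ n−k`
one has `e_ℓ(ẑ) ≡ (-1)^ℓ G'_ℓ(z,ζ) mod J`. -/
theorem eHat_equiv_GPrime_mod_coulomb (k n : ℕ) (hk : 1 ≤ k) (hkn : k < n)
    (ℓ : ℕ) (hℓ1 : 1 ≤ ℓ) (hℓ : ℓ ≤ n - k) :
    eHat k n ℓ - (-1) ^ ℓ * GPrime k n ℓ
      ∈ Ideal.span (Vgen k n '' Set.Icc 1 (n - k)) :=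
  eHat_equiv_GPrime_mod_coulomb_general k n ℓ hℓ

end
end
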